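/- Let V be a finite-dimensional real normed vector space and let C ⊆ V be a closed convex cone that is salient (C ∩ (−C) = {0}) and full-dimensional (has nonempty interior). Suppose C is the closure of the convex cone generated by a set S ⊆ V. If α ∈ C spans an extremal ray of C, then there exists a sequence (c_j) of elements of S and positive real numbers r_j such that α = lim_{j→∞} r_j · c_j. -/

import Mathlib

/-!
A closed salient cone `C` in finite dimension has a compact base `B = C ∩ {L = 1}`, where `L` is a
functional positive on `C \ {0}`, obtained by separating `0` from the compact convex hull of the
unit vectors of `C`. An extremal ray of `C` meets `B` in an extreme point of `B`, and `B` lies in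
the closed convex hull of the normalized generators `s / L s`. By Carathéodory, convex hulls of
compact sets are compact in finite dimension, so Milman's converse of Krein–Milman puts that extreme
point in the closure of the normalized generators.
-/

open Filter Set Topology

section ConvexHull

variable {E : Type*} [AddCommGroup E] [Module ℝ E] [TopologicalSpace E]

theorem isCompact_convexHull [ContinuousAdd E] [ContinuousSMul ℝ E] [FiniteDimensional ℝ E]
    {K : Set E} (hK : IsCompact K) : IsCompact (convexHull ℝ K) := by
  let comb (m : ℕ) (p : (Fin m → ℝ) × (Fin m → E)) : E := ∑ i, p.1 i • p.2 i
  -- Carathéodory: `finrank + 1` points suffice, so the hull is a finite union of compact images.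
  have hunion : convexHull ℝ K = ⋃ m : Fin (Module.finrank ℝ E + 2),
      comb m '' (stdSimplex ℝ (Fin m) ×ˢ univ.pi fun _ => K) := by
    refine subset_antisymm (fun x hx => ?_) (iUnion_subset fun m => ?_)
    · obtain ⟨ι, _, z, w, hzK, hz, hw₀, hw₁, rfl⟩ := eq_pos_convex_span_of_mem_convexHull hx
      have hcard : Fintype.card ι < Module.finrank ℝ E + 2 :=
        Nat.lt_succ_of_le <|
          hz.card_le_finrank_succ.trans (Nat.succ_le_succ (Submodule.finrank_le _))
      let e := (Fintype.equivFin ι).symm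
      refine mem_iUnion.2 ⟨⟨_, hcard⟩, (w ∘ e, z ∘ e), ⟨⟨fun i => (hw₀ _).le, ?_⟩,
        fun i _ => hzK ⟨_, rfl⟩⟩, ?_⟩
      · simpa only [Function.comp_apply, e.sum_comp] using hw₁
      · exact e.sum_comp fun i => w i • z i
    · rintro _ ⟨p, ⟨hw, hz⟩, rfl⟩
      exact mem_convexHull_of_exists_fintype p.1 p.2 hw.1 hw.2 (fun i => hz i trivial) rfl
  rw [hunion]
  exact isCompact_iUnion fun m =>
    ((isCompact_stdSimplex ℝ _).prod (isCompact_univ_pi fun _ => hK)).image (by fun_prop)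

theorem extremePoints_inter_closure_convexHull_subset_closure [ContinuousAdd E]
    [ContinuousSMul ℝ E] [T2Space E] [FiniteDimensional ℝ E] {B s : Set E} (hB : IsCompact B)
    (hBconv : Convex ℝ B) (hsB : s ⊆ B) :
    B.extremePoints ℝ ∩ closure (convexHull ℝ s) ⊆ closure s := by
  rintro x ⟨hxB, hx⟩
  have hsB' : closure s ⊆ B := closure_minimal hsB hB.isClosed
  have hx' : x ∈ convexHull ℝ (closure s) :=
    closure_minimal (convexHull_mono subset_closure)
      (isCompact_convexHull (hB.of_isClosed_subset isClosed_closure hsB')).isClosed hx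
  exact extremePoints_convexHull_subset
    (inter_extremePoints_subset_extremePoints_of_subset (convexHull_min hsB' hBconv) ⟨hx', hxB⟩)

end ConvexHull

section OrderedField

variable {𝕜 E : Type*} [Field 𝕜] [LinearOrder 𝕜] [AddCommGroup E] [Module 𝕜 E]

theorem ConvexCone.Salient.zero_mem_extremePoints {K : ConvexCone 𝕜 E} (hs : K.Salient)
    (hp : K.Pointed) : (0 : E) ∈ (K : Set E).extremePoints 𝕜 := by
  have hzero : ∀ ⦃p q : E⦄, p ∈ K → q ∈ K → p + q = 0 → p = 0 := fun p q hp hq h =>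
    by_contra fun hp0 => hs p hp hp0 (neg_eq_of_add_eq_zero_right h ▸ hq)
  refine mem_extremePoints.2 ⟨hp, fun x hx y hy ⟨a, b, ha, hb, _, hab⟩ => ⟨?_, ?_⟩⟩
  · exact (smul_eq_zero.1 (hzero (K.smul_mem ha hx) (K.smul_mem hb hy) hab)).resolve_left ha.ne'
  · exact (smul_eq_zero.1 (hzero (K.smul_mem hb hy) (K.smul_mem ha hx)
      ((add_comm _ _).trans hab))).resolve_left hb.ne'

theorem ConvexCone.inv_smul_mem_extremePoints_inter [IsStrictOrderedRing 𝕜] {K : ConvexCone 𝕜 E}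
    {L : E →ₗ[𝕜] 𝕜} {α : E} (hα : α ∈ K) (hLα : 0 < L α)
    (hext : ∀ β ∈ K, ∀ γ ∈ K, β + γ = α →
      (∃ t : 𝕜, 0 ≤ t ∧ β = t • α) ∧ (∃ t : 𝕜, 0 ≤ t ∧ γ = t • α)) :
    (L α)⁻¹ • α ∈ ((K : Set E) ∩ {x | L x = 1}).extremePoints 𝕜 := by
  have hnormal : ∀ x, L x = 1 → ∀ t : 𝕜, x = t • α → x = (L α)⁻¹ • α := by
    rintro x hx t rfl
    rw [map_smul, smul_eq_mul] at hx
    rw [eq_inv_of_mul_eq_one_left hx]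
  have hmultiple : ∀ c : 𝕜, 0 < c → ∀ x ∈ (K : Set E) ∩ {x | L x = 1}, ∀ t : 𝕜,
      (L α * c) • x = t • α → x = (L α)⁻¹ • α := fun c hc x hx t h =>
    hnormal x hx.2 ((L α * c)⁻¹ * t) (by rw [mul_smul, ← h, inv_smul_smul₀ (by positivity)])
  refine mem_extremePoints.2 ⟨⟨K.smul_mem (inv_pos.2 hLα) hα, by simp [hLα.ne']⟩,
    fun x₁ hx₁ x₂ hx₂ ⟨a, b, ha, hb, _, hx⟩ => ?_⟩
  have hsplit : (L α * a) • x₁ + (L α * b) • x₂ = α := by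
    rw [mul_smul, mul_smul, ← smul_add, hx, smul_inv_smul₀ hLα.ne']
  obtain ⟨⟨t, -, ht⟩, ⟨t', -, ht'⟩⟩ := hext _ (K.smul_mem (by positivity) hx₁.1) _
    (K.smul_mem (by positivity) hx₂.1) hsplit
  exact ⟨hmultiple a ha x₁ hx₁ t ht, hmultiple b hb x₂ hx₂ t' ht'⟩

theorem inv_smul_sum_mem_convexHull [IsStrictOrderedRing 𝕜] {ι : Type*} [Fintype ι]
    {L : E →ₗ[𝕜] 𝕜} {S : Set E} (hS : ∀ s ∈ S, s ≠ 0 → 0 < L s) {f : ι → 𝕜} {g : ι → E}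
    (hf : ∀ i, 0 ≤ f i) (hg : ∀ i, g i ∈ S) (hy : 0 < L (∑ i, f i • g i)) :
    (L (∑ i, f i • g i))⁻¹ • ∑ i, f i • g i ∈
      convexHull 𝕜 ((fun s => (L s)⁻¹ • s) '' {s ∈ S | 0 < L s}) := by
  classical
  set t := Finset.univ.filter fun i => g i ≠ 0
  have hpos : ∀ i ∈ t, 0 < L (g i) := fun i hi => hS _ (hg i) (Finset.mem_filter.1 hi).2
  have hsum : ∑ i ∈ t, f i • g i = ∑ i, f i • g i :=
    Finset.sum_filter_of_ne fun _ _ h => right_ne_zero_of_smul h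
  have hweight : ∑ i ∈ t, f i * L (g i) = L (∑ i, f i • g i) := by
    simp only [← hsum, map_sum, map_smul, smul_eq_mul]
  have hmass := t.centerMass_mem_convexHull (w := fun i => f i * L (g i))
    (z := fun i => (L (g i))⁻¹ • g i) (s := (fun s => (L s)⁻¹ • s) '' {s ∈ S | 0 < L s})
    (fun i hi => mul_nonneg (hf i) (hpos i hi).le) (hweight ▸ hy)
    fun i hi => ⟨g i, ⟨hg i, hpos i hi⟩, rfl⟩
  convert hmass using 1
  rw [Finset.centerMass, hweight, ← hsum]
  refine congrArg _ (Finset.sum_congr rfl fun i hi => ?_)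
  rw [smul_smul, mul_assoc, mul_inv_cancel₀ (hpos i hi).ne', mul_one]

end OrderedField

def nonnegCombinations {V : Type*} [AddCommMonoid V] [Module ℝ V] (S : Set V) : Set V :=
  {x | ∃ (n : ℕ) (f : Fin n → ℝ) (g : Fin n → V), (∀ i, 0 ≤ f i) ∧ (∀ i, g i ∈ S) ∧
    x = ∑ i, f i • g i}

theorem subset_nonnegCombinations {V : Type*} [AddCommMonoid V] [Module ℝ V] (S : Set V) :
    S ⊆ nonnegCombinations S := fun s hs =>
  ⟨1, fun _ => 1, fun _ => s, fun _ => zero_le_one, fun _ => hs, by simp⟩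

section Topological

variable {V : Type*} [AddCommGroup V] [Module ℝ V] [TopologicalSpace V] [ContinuousSMul ℝ V]

theorem inv_smul_mem_closure_convexHull_of_mem_closure_nonnegCombinations {L : V →L[ℝ] ℝ}
    {S : Set V} (hS : ∀ s ∈ S, s ≠ 0 → 0 < L s) {x : V}
    (hx : x ∈ closure (nonnegCombinations S)) (hLx : 0 < L x) :
    (L x)⁻¹ • x ∈ closure (convexHull ℝ ((fun s => (L s)⁻¹ • s) '' {s ∈ S | 0 < L s})) := by
  have hopen : IsOpen {y | 0 < L y} := isOpen_lt continuous_const L.continuous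
  have hcont : ContinuousWithinAt (fun y => (L y)⁻¹ • y)
      ({y | 0 < L y} ∩ nonnegCombinations S) x :=
    ((L.continuous.continuousAt.inv₀ hLx.ne').smul continuousAt_id).continuousWithinAt
  refine closure_mono ?_ (hcont.mem_closure_image (hopen.inter_closure ⟨hLx, hx⟩))
  rintro _ ⟨y, ⟨hLy, n, f, g, hf, hg, rfl⟩, rfl⟩
  exact inv_smul_sum_mem_convexHull (L := (L : V →ₗ[ℝ] ℝ)) hS hf hg hLy

theorem exists_seq_smul_tendsto_of_smul_mem_closure [FrechetUrysohnSpace V] {S : Set V}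
    {φ : V → ℝ} (hφ : ∀ s ∈ S, 0 < φ s) {a : ℝ} (ha : 0 < a) {α : V}
    (hα : a • α ∈ closure ((fun s => φ s • s) '' S)) :
    ∃ (c : ℕ → V) (r : ℕ → ℝ), (∀ j, c j ∈ S) ∧ (∀ j, 0 < r j) ∧
      Tendsto (fun j => r j • c j) atTop (𝓝 α) := by
  obtain ⟨y, hyS, hy⟩ := mem_closure_iff_seq_limit.1 hα
  choose c hc hcy using hyS
  refine ⟨c, fun j => a⁻¹ * φ (c j), hc, fun j => mul_pos (inv_pos.2 ha) (hφ _ (hc j)), ?_⟩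
  simp_rw [mul_smul, hcy]
  simpa [inv_smul_smul₀ ha.ne'] using hy.const_smul a⁻¹

end Topological

namespace ConvexCone.Salient

variable {V : Type*} [NormedAddCommGroup V] [NormedSpace ℝ V] [FiniteDimensional ℝ V]
  {K : ConvexCone ℝ V}

theorem exists_mul_norm_le (hs : K.Salient) (hp : K.Pointed) (hc : IsClosed (K : Set V)) :
    ∃ (L : V →L[ℝ] ℝ) (u : ℝ), 0 < u ∧ ∀ x ∈ K, u * ‖x‖ ≤ L x := by
  set D := convexHull ℝ ((K : Set V) ∩ Metric.sphere 0 1)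
  have hD : IsCompact D := isCompact_convexHull ((isCompact_sphere 0 1).inter_left hc)
  -- `0` is extreme in `K ⊇ D`, hence extreme in `D`, hence one of the unit vectors spanning `D`.
  have h0D : (0 : V) ∉ D := fun h0 => by
    simpa using (extremePoints_convexHull_subset (inter_extremePoints_subset_extremePoints_of_subset
      (convexHull_min inter_subset_left K.convex) ⟨h0, hs.zero_mem_extremePoints hp⟩)).2
  obtain ⟨L, u, hu, hL⟩ :=
    geometric_hahn_banach_point_closed (convex_convexHull ℝ _) hD.isClosed h0D
  refine ⟨L, u, by simpa using hu, fun x hx => ?_⟩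
  rcases eq_or_ne x 0 with rfl | hx0
  · simp
  have hxn : 0 < ‖x‖ := norm_pos_iff.2 hx0
  have hunit := hL _ (subset_convexHull ℝ _
    ⟨K.smul_mem (inv_pos.2 hxn) hx, by simp [norm_smul, hxn.ne']⟩)
  rw [map_smul, smul_eq_mul, lt_inv_mul_iff₀ hxn, mul_comm] at hunit
  exact hunit.le

theorem exists_isCompact_base (hs : K.Salient) (hp : K.Pointed) (hc : IsClosed (K : Set V)) :
    ∃ L : V →L[ℝ] ℝ, (∀ x ∈ K, x ≠ 0 → 0 < L x) ∧ IsCompact ((K : Set V) ∩ {x | L x = 1}) := by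
  obtain ⟨L, u, hu, hL⟩ := hs.exists_mul_norm_le hp hc
  refine ⟨L, fun x hx hx0 => (mul_pos hu (norm_pos_iff.2 hx0)).trans_le (hL x hx), ?_⟩
  refine Metric.isCompact_of_isClosed_isBounded (hc.inter (isClosed_eq L.continuous
    continuous_const)) (isBounded_iff_forall_norm_le.2 ⟨u⁻¹, fun x ⟨hx, hLx⟩ => ?_⟩)
  rw [← mul_one u⁻¹, le_inv_mul_iff₀ hu]
  exact (hL x hx).trans hLx.le

end ConvexCone.Salient

theorem extremal_ray_is_limit_of_generators_general
    {V : Type*} [NormedAddCommGroup V] [NormedSpace ℝ V] [FiniteDimensional ℝ V]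
    (C : Set V) (S : Set V)
    (hclosed : IsClosed C)
    (hadd : ∀ x ∈ C, ∀ y ∈ C, x + y ∈ C)
    (hsmul : ∀ r : ℝ, 0 < r → ∀ x ∈ C, r • x ∈ C)
    (hsalient : C ∩ (-C) = {0})
    (hgen : C = closure {x : V | ∃ (n : ℕ) (f : Fin n → ℝ) (g : Fin n → V),
      (∀ i, 0 ≤ f i) ∧ (∀ i, g i ∈ S) ∧ x = ∑ i, f i • g i})
    (α : V) (hαC : α ∈ C) (hα0 : α ≠ 0)
    (hext : ∀ β ∈ C, ∀ γ ∈ C, β + γ = α →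
      (∃ t : ℝ, 0 ≤ t ∧ β = t • α) ∧ (∃ t : ℝ, 0 ≤ t ∧ γ = t • α)) :
    ∃ (c : ℕ → V) (r : ℕ → ℝ), (∀ j, c j ∈ S) ∧ (∀ j, 0 < r j) ∧
      Tendsto (fun j => r j • c j) atTop (𝓝 α) := by
  let K : ConvexCone ℝ V := ⟨C, fun r hr x hx => hsmul r hr x hx, fun x hx y hy => hadd x hx y hy⟩
  have hKs : K.Salient := fun x hx hx0 hnx => hx0 (hsalient.subset ⟨hx, hnx⟩)
  have hKp : K.Pointed := (hsalient.symm.subset rfl).1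
  have hgen' : C = closure (nonnegCombinations S) := hgen
  obtain ⟨L, hLpos, hB⟩ := hKs.exists_isCompact_base hKp hclosed
  have hSC : S ⊆ C := hgen' ▸ (subset_nonnegCombinations S).trans subset_closure
  have hLα : 0 < L α := hLpos α hαC hα0
  have hS₁B : (fun s => (L s)⁻¹ • s) '' {s ∈ S | 0 < L s} ⊆ C ∩ {x | L x = 1} := by
    rintro _ ⟨s, ⟨hs, hLs⟩, rfl⟩
    exact ⟨K.smul_mem (inv_pos.2 hLs) (hSC hs), by simp [hLs.ne']⟩
  have hbase := extremePoints_inter_closure_convexHull_subset_closure hB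
    (K.convex.inter (convex_hyperplane L.toLinearMap.isLinear 1)) hS₁B
    ⟨K.inv_smul_mem_extremePoints_inter (L := L.toLinearMap) hαC hLα hext,
      inv_smul_mem_closure_convexHull_of_mem_closure_nonnegCombinations
        (fun s hs => hLpos s (hSC hs)) (hgen' ▸ hαC) hLα⟩
  obtain ⟨c, r, hc, hr, hlim⟩ :=
    exists_seq_smul_tendsto_of_smul_mem_closure (fun s hs => inv_pos.2 hs.2) (inv_pos.2 hLα) hbase
  exact ⟨c, r, fun j => (hc j).1, hr, hlim⟩

/-- Lemma 4.1: an extremal element of a closed, salient, full-dimensional convex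
cone generated (as a closed cone) by a set `S` is a limit of positive multiples
of elements of `S`. -/
theorem extremal_ray_is_limit_of_generators
    {V : Type*} [NormedAddCommGroup V] [NormedSpace ℝ V] [FiniteDimensional ℝ V]
    (C : Set V) (S : Set V)
    (hclosed : IsClosed C)
    (hadd : ∀ x ∈ C, ∀ y ∈ C, x + y ∈ C)
    (hsmul : ∀ r : ℝ, 0 < r → ∀ x ∈ C, r • x ∈ C)
    (hsalient : C ∩ (-C) = {0})
    (hfull : (interior C).Nonempty)
    (hgen : C = closure {x : V | ∃ (n : ℕ) (f : Fin n → ℝ) (g : Fin n → V),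
      (∀ i, 0 ≤ f i) ∧ (∀ i, g i ∈ S) ∧ x = ∑ i, f i • g i})
    (α : V) (hαC : α ∈ C) (hα0 : α ≠ 0)
    (hext : ∀ β ∈ C, ∀ γ ∈ C, β + γ = α →
      (∃ t : ℝ, 0 ≤ t ∧ β = t • α) ∧ (∃ t : ℝ, 0 ≤ t ∧ γ = t • α)) :
    ∃ (c : ℕ → V) (r : ℕ → ℝ), (∀ j, c j ∈ S) ∧ (∀ j, 0 < r j) ∧
      Tendsto (fun j => r j • c j) atTop (𝓝 α) :=
  extremal_ray_is_limit_of_generators_general C S hclosed hadd hsmul hsalient hgen α hαC hα0 hext
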